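/- arXiv:1806.10260 — 3 statements merged into one kernel-verified Lean document; each statement's English description precedes it below -/
import Mathlib

section
/- Higman's Lemma: if (Σ, ≤) is a well-quasi-order, then the set Σ* of finite sequences over Σ is a well-quasi-order under the relation: (a_1,...,a_m) ⪯ (b_1,...,b_n) iff there is a strictly increasing function f : {1,...,m} → {1,...,n} with a_i ≤ b_{f(i)} for each i. -/
theorem WellQuasiOrdered.refl {α : Type*} {r : α → α → Prop} (h : WellQuasiOrdered r) (a : α) :
    r a a :=
  let ⟨_, _, _, haa⟩ := h fun _ ↦ a
  haa

theorem WellQuasiOrdered.sublistForall₂ {α : Type*} {r : α → α → Prop} [IsTrans α r]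
    (h : WellQuasiOrdered r) : WellQuasiOrdered (List.SublistForall₂ r) := by
  have : Std.Refl r := ⟨h.refl⟩
  have : IsPreorder α r := {}
  rw [← Set.partiallyWellOrderedOn_univ_iff] at h ⊢
  simpa only [Set.mem_univ, implies_true, Set.ofPred_true] using
    h.partiallyWellOrderedOn_sublistForall₂ r

theorem stmt_4_general {σ : Type*} (le : σ → σ → Prop)
    (htrans : ∀ a b c, le a b → le b c → le a c)
    (hwqo : ∀ f : ℕ → σ, ∃ i j, i < j ∧ le (f i) (f j)) :
    ∀ L : ℕ → List σ, ∃ i j, i < j ∧ List.SublistForall₂ le (L i) (L j) :=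
  have : IsTrans σ le := ⟨htrans⟩
  WellQuasiOrdered.sublistForall₂ hwqo

/-- Higman's Lemma: if `(Σ, ≤)` is a well-quasi-order then the finite sequences over
`Σ`, ordered by the subword embedding order (an order-preserving injection of indices
with `a i ≤ b (f i)`), form a well-quasi-order. -/
theorem stmt_4 {σ : Type*} (le : σ → σ → Prop)
    (hrefl : ∀ a, le a a) (htrans : ∀ a b c, le a b → le b c → le a c)
    (hwqo : ∀ f : ℕ → σ, ∃ i j, i < j ∧ le (f i) (f j)) :
    ∀ L : ℕ → List σ, ∃ i j, i < j ∧ List.SublistForall₂ le (L i) (L j) :=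
  stmt_4_general le htrans hwqo
end

section
/- If a path presentation [P,Q] contains a k×k square, then the lattice path matroid M[P,Q] has a U_{k,2k}-minor. -/
open Matroid

/-- Steps: `true` is a North step, `false` is an East step. -/
def nCount (w : List Bool) : ℕ := w.count true

def eCount (w : List Bool) : ℕ := w.count false

/-- `P` and `Q` are lattice paths from `(0,0)` to `(m,r)` with `P` never above `Q`. -/
structure IsLatticePair (P Q : List Bool) (m r : ℕ) : Prop where
  lenP : P.length = m + r
  lenQ : Q.length = m + r
  northP : nCount P = r
  northQ : nCount Q = r
  notAbove : ∀ i, nCount (P.take i) ≤ nCount (Q.take i)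

/-- The (1-indexed) positions of the North steps of a path. -/
def northPositions (w : List Bool) : List ℕ :=
  ((List.range w.length).filter (fun j => w.getD j false)).map (· + 1)

/-- `X` is a partial transversal of the intervals `N_i = [l_i, u_i]`, `i < r`, where
`u_i` (resp. `l_i`) is the position of the `i`-th North step of `P` (resp. `Q`). -/
def IsPartialTransversal (P Q : List Bool) (r : ℕ) (X : Set ℕ) : Prop :=
  ∃ f : ℕ → ℕ, Set.InjOn f X ∧ ∀ x ∈ X, f x < r ∧
    (northPositions Q).getD (f x) 0 ≤ x ∧ x ≤ (northPositions P).getD (f x) 0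

/-- `M` is the lattice path matroid `M[P,Q]`: the transversal matroid on `[m+r]`
whose independent sets are the partial transversals of the intervals `N_i`. -/
def IsLPM (M : Matroid ℕ) (P Q : List Bool) (m r : ℕ) : Prop :=
  IsLatticePair P Q m r ∧ M.E = Set.Icc 1 (m + r) ∧
    ∀ X : Set ℕ, M.Indep X ↔ X ⊆ M.E ∧ IsPartialTransversal P Q r X

/-- `[P,Q]` has a `k × k` square at `i`: the length-`i` prefix of `P` has exactly `k`
more East steps than that of `Q`, and the prefix of `Q` has `k` more North steps. -/
def HasSquareAt (P Q : List Bool) (k i : ℕ) : Prop :=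
  eCount (P.take i) = eCount (Q.take i) + k ∧ nCount (Q.take i) = nCount (P.take i) + k

/-- The square-width of a presentation: the largest `k` such that it has a `k × k` square. -/
noncomputable def squareWidth (P Q : List Bool) : ℕ :=
  sSup {k | ∃ i, HasSquareAt P Q k i}

/-- `N` is a minor of `M`: obtained by contracting a set `C` and deleting a set `D`. -/
def IsMinorOf {α : Type*} (N M : Matroid α) : Prop :=
  ∃ C D : Set α, C ⊆ M.E ∧ D ⊆ M.E ∧ Disjoint C D ∧
    N = ((M✶ ↾ (M.E \ C))✶) ↾ ((M.E \ C) \ D)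

/-- An isomorphism between matroids: a bijection of ground sets preserving independence. -/
def MatroidIso {α β : Type*} (M : Matroid α) (N : Matroid β) : Prop :=
  ∃ f : α → β, Set.BijOn f M.E N.E ∧ ∀ X ⊆ M.E, (M.Indep X ↔ N.Indep (f '' X))

/-- `N` is isomorphic to a minor of `M`. -/
def IsIsoMinorOf {α β : Type*} (N : Matroid α) (M : Matroid β) : Prop :=
  ∃ N' : Matroid β, IsMinorOf N' M ∧ MatroidIso N' N

/-- `M` is (isomorphic to) the uniform matroid `U_{r,n}`. -/
def IsUniform {α : Type*} (M : Matroid α) (r n : ℕ) : Prop :=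
  M.E.encard = (n : ℕ∞) ∧ ∀ X ⊆ M.E, (M.Indep X ↔ X.encard ≤ (r : ℕ∞))

/-- The rank (in `ℕ∞`) of a set in a matroid. -/
noncomputable def eRk {α : Type*} (M : Matroid α) (A : Set α) : ℕ∞ :=
  ⨆ I : {I : Set α // M.Indep I ∧ I ⊆ A}, (I : Set α).encard

/-- Binary trees, used to model the cubic trees of branch decompositions. -/
inductive BTree (α : Type*) where
  | leaf : α → BTree α
  | node : BTree α → BTree α → BTree α

def BTree.leafList {α : Type*} : BTree α → List α
  | .leaf a => [a]
  | .node l r => l.leafList ++ r.leafList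

def BTree.subtrees {α : Type*} : BTree α → List (BTree α)
  | .leaf a => [.leaf a]
  | .node l r => .node l r :: (l.subtrees ++ r.subtrees)

/-- The connectivity value `λ(A) = r(A) + r(E \ A) − r(E) + 1`. -/
noncomputable def lamVal {α : Type*} (M : Matroid α) (A : Set α) : ℕ∞ :=
  _root_.eRk M A + _root_.eRk M (M.E \ A) - _root_.eRk M M.E + 1

/-- A branch decomposition of `M`: a (cubic) tree whose leaves are bijectively
labelled by the elements of `M`. -/
def IsBranchDecomp {α : Type*} (M : Matroid α) (t : BTree α) : Prop :=
  t.leafList.Nodup ∧ {x | x ∈ t.leafList} = M.E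

/-- The width of a branch decomposition: the maximum of `λ` over the edges
(equivalently, over the leaf sets of the subtrees). -/
noncomputable def decompWidth {α : Type*} (M : Matroid α) (t : BTree α) : ℕ∞ :=
  (t.subtrees.map (fun s => lamVal M {x | x ∈ s.leafList})).foldr max 0

/-- The branch-width of a matroid. -/
noncomputable def branchWidth {α : Type*} (M : Matroid α) : ℕ∞ :=
  sInf {w | ∃ t : BTree α, IsBranchDecomp M t ∧ decompWidth M t = w}

/-- The lattice path `P(X)` associated to a subset `X` of `[len]`. -/
noncomputable def pathWord (X : Set ℕ) (len : ℕ) : List Bool :=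
  (List.range len).map (fun j => @decide ((j + 1) ∈ X) (Classical.propDecidable _))

def glue (PB QB PT QT : List Bool) (k : ℕ) : List Bool × List Bool :=
  (PB.take (PB.length - k) ++ PT.drop k, QB.take (QB.length - k) ++ QT.drop k)

/-!
Write `N_j = [l_j, u_j]` for the intervals of the presentation. A `k × k` square at `i` says
that the `k` intervals `N_j`, `p ≤ j < q = p + k`, all straddle `i`: `l_j ≤ i < u_j`, where
`p` and `q` count the North steps of `P` and `Q` before `i`. Contract the left endpoints of
the `p` intervals below the square and the right endpoints of the `r - q` intervals above
it, and keep the `2k` endpoints of the square intervals. A set `X` of kept elements extends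
the contracted set to a partial transversal iff `|X| ≤ k`: a transversal has at most `r`
elements, and conversely a greedy matching works, sending elements `≤ i` to intervals
counted from the bottom and elements `> i` to intervals counted from the top.
-/

section LatticePath

variable {w : List Bool}

def northPos (w : List Bool) (j : ℕ) : ℕ := (northPositions w).getD j 0

lemma nCount_take_eq_count (w : List Bool) (t : ℕ) :
    nCount (w.take t) = Nat.count (fun j => w.getD j false) t := by
  induction t with
  | zero => simp [nCount]
  | succ t ih =>
    rw [Nat.count_succ, ← ih, List.take_add_one, nCount, nCount, List.count_append,
      List.getD_eq_getElem?_getD]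
    rcases w[t]? with _ | _ | _ <;> simp

lemma nCount_eq_count (w : List Bool) :
    nCount w = Nat.count (fun j => w.getD j false) w.length := by
  rw [← nCount_take_eq_count, List.take_length]

lemma nCount_take_le (t : ℕ) : nCount (w.take t) ≤ nCount w :=
  (List.take_sublist t w).count_le true

lemma lt_length_of_getD_eq_true {j : ℕ} (h : w.getD j false = true) : j < w.length := by
  by_contra hj
  rw [List.getD_eq_default _ _ (not_lt.1 hj)] at h
  exact Bool.false_ne_true h

lemma length_filter_range_eq_nCount :
    ((List.range w.length).filter (fun j => w.getD j false)).length = nCount w := by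
  rw [nCount_eq_count, Nat.count_eq_card_filter_range, Finset.card_def, Finset.filter_val,
    Finset.range_val, Multiset.range, Multiset.filter_coe, Multiset.coe_card]
  simp

lemma nth_eq_getD_filter_range (w : List Bool) (j : ℕ) :
    Nat.nth (fun j => w.getD j false) j =
      ((List.range w.length).filter (fun j => w.getD j false)).getD j 0 := by
  set L := (List.range w.length).filter (fun j => w.getD j false)
  have hL : ∀ i, i ∈ L ↔ w.getD i false = true := fun i => by
    simpa [L] using fun h => lt_length_of_getD_eq_true h
  have hfin : (Set.ofPred fun j => w.getD j false = true).Finite :=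
    L.toFinset.finite_toSet.subset fun i hi => by simpa [hL] using hi
  have hLfin : hfin.toFinset = L.toFinset := by
    ext i
    simp [hL]
  rw [Nat.nth_eq_getD_sort hfin, hLfin, (List.toFinset_sort _ ((List.nodup_range).filter _)).2]
  exact (List.pairwise_lt_range.filter _).imp le_of_lt

lemma lt_card_of_lt_nCount {j : ℕ} (hj : j < nCount w)
    (hf : (Set.ofPred fun j => w.getD j false = true).Finite) : j < hf.toFinset.card :=
  (nCount_eq_count w ▸ hj).trans_le (Nat.count_le_card hf _)

lemma northPos_eq_nth_add_one {j : ℕ} (hj : j < nCount w) :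
    northPos w j = Nat.nth (fun j => w.getD j false) j + 1 := by
  rw [← length_filter_range_eq_nCount] at hj
  rw [northPos, northPositions, List.getD_eq_getElem _ _ (by simpa using hj),
    List.getElem_map, nth_eq_getD_filter_range, List.getD_eq_getElem _ _ hj]

lemma northPos_le_iff {j : ℕ} (hj : j < nCount w) (t : ℕ) :
    northPos w j ≤ t ↔ j < nCount (w.take t) := by
  rw [northPos_eq_nth_add_one hj, nCount_take_eq_count, Nat.add_one_le_iff]
  refine ⟨fun h => ?_, Nat.nth_lt_of_lt_count⟩
  calc j < j + 1 := j.lt_succ_self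
    _ = Nat.count _ (Nat.nth _ j + 1) := (Nat.count_nth_succ (lt_card_of_lt_nCount hj)).symm
    _ ≤ _ := Nat.count_monotone _ h

lemma strictMonoOn_northPos : StrictMonoOn (northPos w) (Set.Iio (nCount w)) := by
  intro a ha b hb hab
  simp only [northPos_eq_nth_add_one ha, northPos_eq_nth_add_one hb, add_lt_add_iff_right]
  exact Nat.nth_lt_nth' hab (lt_card_of_lt_nCount hb)

lemma northPos_mem_Icc {j : ℕ} (hj : j < nCount w) : northPos w j ∈ Set.Icc 1 w.length := by
  refine ⟨Nat.one_le_iff_ne_zero.2 fun h0 => ?_,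
    (northPos_le_iff hj _).2 (by rwa [List.take_length])⟩
  simpa [nCount] using (northPos_le_iff hj 0).1 h0.le

end LatticePath

section IntervalSystem

open Finset

variable {α : Type*} [LinearOrder α]

/-- `IsPartialTransversal P Q r` is the case where `l j` and `u j` are the positions of the
`j`-th North steps of `Q` and `P`. -/
def IsPartialTransversalOf (l u : ℕ → α) (r : ℕ) (Y : Set α) : Prop :=
  ∃ f : α → ℕ, Set.InjOn f Y ∧ ∀ x ∈ Y, f x < r ∧ l (f x) ≤ x ∧ x ≤ u (f x)

lemma IsPartialTransversalOf.card_le {l u : ℕ → α} {r : ℕ} {Y : Finset α}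
    (hY : IsPartialTransversalOf l u r Y) : #Y ≤ r := by
  obtain ⟨f, hinj, hf⟩ := hY
  simpa using card_le_card_of_injOn f (fun x hx => mem_range.2 (hf x hx).1) hinj

lemma strictMonoOn_card_filter_lt (Y : Finset α) :
    StrictMonoOn (fun x => #{y ∈ Y | y < x}) Y := fun x hx x' _ hxx' =>
  card_lt_card <| (ssubset_iff_of_subset fun y hy => by
    simp only [mem_filter] at hy ⊢; exact ⟨hy.1, hy.2.trans hxx'⟩).2
    ⟨x, by simp_all, by simp⟩

lemma strictAntiOn_card_filter_gt (Y : Finset α) :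
    StrictAntiOn (fun x => #{y ∈ Y | x < y}) Y := fun x _ x' hx' hxx' =>
  card_lt_card <| (ssubset_iff_of_subset fun y hy => by
    simp only [mem_filter] at hy ⊢; exact ⟨hy.1, hxx'.trans hy.2⟩).2
    ⟨x', by simp_all, by simp⟩

def greedyIndex (Y : Finset α) (r : ℕ) (t x : α) : ℕ :=
  if x ≤ t then #{y ∈ Y | y < x} else r - 1 - #{y ∈ Y | x < y}

lemma strictMonoOn_greedyIndex {Y : Finset α} {r : ℕ} (hY : #Y ≤ r) (t : α) :
    StrictMonoOn (greedyIndex Y r t) Y := by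
  intro x hx x' hx' hxx'
  have hsplit : #{y ∈ Y | y ≤ t} + #{y ∈ Y | t < y} = #Y := by
    simpa only [not_le] using card_filter_add_card_filter_not (s := Y) (· ≤ t)
  have hgt : #{y ∈ Y | x < y} < #Y := card_lt_card (filter_ssubset.2 ⟨x, hx, lt_irrefl x⟩)
  unfold greedyIndex
  split_ifs with ht ht' ht'
  · exact strictMonoOn_card_filter_lt Y hx hx' hxx'
  · have hlow : #{y ∈ Y | y < x} < #{y ∈ Y | y ≤ t} :=
      card_lt_card <| (ssubset_iff_of_subset <| monotone_filter_right _ fun y _ hy =>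
        hy.le.trans ht).2 ⟨x, by simp_all, by simp⟩
    have hhigh : #{y ∈ Y | x' < y} < #{y ∈ Y | t < y} :=
      card_lt_card <| (ssubset_iff_of_subset <| monotone_filter_right _ fun y _ hy =>
        (not_le.1 ht').trans hy).2 ⟨x', by simp_all, by simp⟩
    omega
  · exact absurd (hxx'.le.trans ht') ht
  · have : #{y ∈ Y | x' < y} < #{y ∈ Y | x < y} := strictAntiOn_card_filter_gt Y hx hx' hxx'
    omega

omit [LinearOrder α] in
lemma exists_eq_of_mem_image_union_image [DecidableEq α] {l u : ℕ → α} {r p q : ℕ}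
    {Y : Finset α} (hY : Y ⊆ (range q).image l ∪ (Ico p r).image u) {x : α} (hx : x ∈ Y) :
    (∃ a < q, l a = x) ∨ ∃ b, (p ≤ b ∧ b < r) ∧ u b = x := by
  simpa only [mem_union, mem_image, mem_range, mem_Ico] using hY hx

/-- Intervals `[l j, u j]`, `j < r`, with increasing endpoints, such that the intervals
`p ≤ j < q` straddle `t`. A presentation with a `k × k` square at `t` gives one, with `p` and
`q = p + k` the numbers of North steps of `P` and `Q` before `t`. -/
structure IsIntervalSquare (l u : ℕ → α) (r p q : ℕ) (t : α) : Prop where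
  strictMonoOn_left : StrictMonoOn l (Set.Iio r)
  strictMonoOn_right : StrictMonoOn u (Set.Iio r)
  left_le_right : ∀ j < r, l j ≤ u j
  left_le : ∀ j < q, l j ≤ t
  lt_right : ∀ j < r, p ≤ j → t < u j
  le_left : p ≤ q
  le_right : q ≤ r

def outerFinset (l u : ℕ → α) (r p q : ℕ) : Finset α :=
  (range p).image l ∪ (Ico q r).image u

def squareFinset (l u : ℕ → α) (p q : ℕ) : Finset α :=
  (Ico p q).image l ∪ (Ico p q).image u

namespace IsIntervalSquare

variable {l u : ℕ → α} {r p q : ℕ} {t : α} {Y : Finset α}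

lemma injOn_left (h : IsIntervalSquare l u r p q t) {A : Finset ℕ} (hA : A ⊆ range r) :
    Set.InjOn l A :=
  h.strictMonoOn_left.injOn.mono fun _ hj => mem_range.1 (hA hj)

lemma injOn_right (h : IsIntervalSquare l u r p q t) {A : Finset ℕ} (hA : A ⊆ range r) :
    Set.InjOn u A :=
  h.strictMonoOn_right.injOn.mono fun _ hj => mem_range.1 (hA hj)

lemma disjoint_image_left_image_right (h : IsIntervalSquare l u r p q t) {A B : Finset ℕ}
    (hA : A ⊆ range q) (hB : B ⊆ Ico p r) : Disjoint (A.image l) (B.image u) := by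
  simp only [disjoint_left, mem_image, not_exists, not_and]
  rintro _ ⟨a, ha, rfl⟩ b hb hba
  have hb := mem_Ico.1 (hB hb)
  exact absurd (h.left_le a (mem_range.1 (hA ha))) (hba ▸ not_le.2 (h.lt_right b hb.2 hb.1))

lemma disjoint_image_left_image_left (h : IsIntervalSquare l u r p q t) {A B : Finset ℕ}
    (hA : A ⊆ range r) (hB : B ⊆ range r) (hAB : Disjoint A B) :
    Disjoint (A.image l) (B.image l) := by
  rw [disjoint_iff_inter_eq_empty, ← image_inter_of_injOn _ _
    (by rw [← coe_union]; exact h.injOn_left (union_subset hA hB)),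
    disjoint_iff_inter_eq_empty.1 hAB, image_empty]

lemma disjoint_image_right_image_right (h : IsIntervalSquare l u r p q t) {A B : Finset ℕ}
    (hA : A ⊆ range r) (hB : B ⊆ range r) (hAB : Disjoint A B) :
    Disjoint (A.image u) (B.image u) := by
  rw [disjoint_iff_inter_eq_empty, ← image_inter_of_injOn _ _
    (by rw [← coe_union]; exact h.injOn_right (union_subset hA hB)),
    disjoint_iff_inter_eq_empty.1 hAB, image_empty]

lemma card_outerFinset (h : IsIntervalSquare l u r p q t) :
    #(outerFinset l u r p q) = p + (r - q) := by
  have hp : range p ⊆ range q := range_subset_range.2 h.le_left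
  rw [outerFinset, card_union_of_disjoint (h.disjoint_image_left_image_right hp
      (Ico_subset_Ico_left h.le_left)),
    card_image_of_injOn (h.injOn_left (hp.trans (range_subset_range.2 h.le_right))),
    card_image_of_injOn (h.injOn_right fun _ hj => mem_range.2 (mem_Ico.1 hj).2),
    card_range, Nat.card_Ico]

lemma card_squareFinset (h : IsIntervalSquare l u r p q t) :
    #(squareFinset l u p q) = 2 * (q - p) := by
  have hr : Ico p q ⊆ range r := fun j hj => mem_range.2 ((mem_Ico.1 hj).2.trans_le h.le_right)
  rw [squareFinset, card_union_of_disjoint (h.disjoint_image_left_image_right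
      (fun _ hj => mem_range.2 (mem_Ico.1 hj).2) (Ico_subset_Ico_right h.le_right)),
    card_image_of_injOn (h.injOn_left hr), card_image_of_injOn (h.injOn_right hr), Nat.card_Ico]
  omega

lemma disjoint_squareFinset_outerFinset (h : IsIntervalSquare l u r p q t) :
    Disjoint (squareFinset l u p q) (outerFinset l u r p q) := by
  have hpq : Ico p q ⊆ range r := fun j hj => mem_range.2 ((mem_Ico.1 hj).2.trans_le h.le_right)
  have hp : range p ⊆ range r := range_subset_range.2 (h.le_left.trans h.le_right)
  have hqr : Ico q r ⊆ range r := fun j hj => mem_range.2 (mem_Ico.1 hj).2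
  simp only [squareFinset, outerFinset, disjoint_union_left, disjoint_union_right]
  refine ⟨⟨h.disjoint_image_left_image_left hpq hp ?_,
      (h.disjoint_image_left_image_right (range_subset_range.2 h.le_left)
        (Ico_subset_Ico_right h.le_right)).symm⟩,
    ⟨h.disjoint_image_left_image_right (fun _ hj => mem_range.2 (mem_Ico.1 hj).2)
      (Ico_subset_Ico_left h.le_left), h.disjoint_image_right_image_right hpq hqr ?_⟩⟩
  · rw [range_eq_Ico]; exact (Ico_disjoint_Ico_consecutive 0 p q).symm
  · exact Ico_disjoint_Ico_consecutive p q r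

lemma squareFinset_union_outerFinset_subset (h : IsIntervalSquare l u r p q t) :
    squareFinset l u p q ∪ outerFinset l u r p q ⊆ (range q).image l ∪ (Ico p r).image u :=
  union_subset
    (union_subset_union (image_subset_image fun _ hj => mem_range.2 (mem_Ico.1 hj).2)
      (image_subset_image (Ico_subset_Ico_right h.le_right)))
    (union_subset_union (image_subset_image (range_subset_range.2 h.le_left))
      (image_subset_image (Ico_subset_Ico_left h.le_left)))

lemma coe_squareFinset_union_outerFinset_subset (h : IsIntervalSquare l u r p q t) {s : Set α}
    (hl : ∀ j < r, l j ∈ s) (hu : ∀ j < r, u j ∈ s) :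
    ↑(squareFinset l u p q ∪ outerFinset l u r p q) ⊆ s := by
  intro x hx
  rcases exists_eq_of_mem_image_union_image h.squareFinset_union_outerFinset_subset
    (mem_coe.1 hx) with ⟨j, hj, rfl⟩ | ⟨j, hj, rfl⟩
  · exact hl j (hj.trans_le h.le_right)
  · exact hu j hj.2

lemma greedyIndex_mem_of_le (h : IsIntervalSquare l u r p q t)
    (hY : Y ⊆ (range q).image l ∪ (Ico p r).image u) (hlY : ∀ j < p, l j ∈ Y)
    {x : α} (hx : x ∈ Y) (hxt : x ≤ t) :
    greedyIndex Y r t x < r ∧ l (greedyIndex Y r t x) ≤ x ∧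
      x ≤ u (greedyIndex Y r t x) := by
  obtain ⟨a, ha, rfl⟩ : ∃ a < q, l a = x := by
    rcases exists_eq_of_mem_image_union_image hY hx with ha | ⟨b, hb, rfl⟩
    · exact ha
    · exact absurd hxt (not_le.2 (h.lt_right b hb.2 hb.1))
  have har : a < r := ha.trans_le h.le_right
  simp only [greedyIndex, if_pos hxt]
  set c := #{y ∈ Y | y < l a}
  have hca : c ≤ a := by
    refine (card_le_card fun y hy => ?_).trans
      ((card_image_le (s := range a) (f := l)).trans (card_range a).le)
    obtain ⟨hyY, hya⟩ := mem_filter.1 hy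
    rcases exists_eq_of_mem_image_union_image hY hyY with ⟨j, hj, rfl⟩ | ⟨j, hj, rfl⟩
    · exact mem_image_of_mem l (mem_range.2
        ((h.strictMonoOn_left.lt_iff_lt (hj.trans_le h.le_right) har).1 hya))
    · exact absurd (hya.trans_le hxt) (not_lt.2 (h.lt_right j hj.2 hj.1).le)
  have hpc : min a p ≤ c := by
    have hsub : ∀ j ∈ range (min a p), j < a ∧ j < p := fun j hj => by
      have := mem_range.1 hj; omega
    have har' : range (min a p) ⊆ range r := fun j hj => mem_range.2 ((hsub j hj).1.trans har)
    calc min a p = #((range (min a p)).image l) := by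
          rw [card_image_of_injOn (h.injOn_left har'), card_range]
      _ ≤ c := card_le_card <| image_subset_iff.2 fun j hj => mem_filter.2
          ⟨hlY j (hsub j hj).2, h.strictMonoOn_left (mem_range.1 (har' hj)) har (hsub j hj).1⟩
  refine ⟨hca.trans_lt har, h.strictMonoOn_left.monotoneOn (hca.trans_lt har) har hca, ?_⟩
  rcases lt_or_ge c p with hcp | hpc'
  · rw [show c = a by omega]
    exact h.left_le_right a har
  · exact hxt.trans (h.lt_right c (hca.trans_lt har) hpc').le

lemma greedyIndex_mem_of_lt (h : IsIntervalSquare l u r p q t)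
    (hY : Y ⊆ (range q).image l ∪ (Ico p r).image u)
    (huY : ∀ j, q ≤ j → j < r → u j ∈ Y)
    {x : α} (hx : x ∈ Y) (htx : t < x) :
    greedyIndex Y r t x < r ∧ l (greedyIndex Y r t x) ≤ x ∧
      x ≤ u (greedyIndex Y r t x) := by
  obtain ⟨b, ⟨hpb, hbr⟩, rfl⟩ : ∃ b, (p ≤ b ∧ b < r) ∧ u b = x := by
    rcases exists_eq_of_mem_image_union_image hY hx with ⟨a, ha, rfl⟩ | hb
    · exact absurd (h.left_le a ha) (not_le.2 htx)
    · exact hb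
  simp only [greedyIndex, if_neg (not_le.2 htx)]
  set d := #{y ∈ Y | u b < y}
  have hdb : d ≤ r - 1 - b := by
    refine (card_le_card fun y hy => ?_).trans
      (((card_image_le (s := Ioo b r) (f := u)).trans (Nat.card_Ioo b r).le).trans (by omega))
    obtain ⟨hyY, hby⟩ := mem_filter.1 hy
    rcases exists_eq_of_mem_image_union_image hY hyY with ⟨j, hj, rfl⟩ | ⟨j, hj, rfl⟩
    · exact absurd ((h.left_le j hj).trans_lt (htx.trans hby)) (lt_irrefl _)
    · exact mem_image_of_mem u (mem_Ioo.2
        ⟨(h.strictMonoOn_right.lt_iff_lt hbr hj.2).1 hby, hj.2⟩)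
  have hdq : min (r - 1 - b) (r - q) ≤ d := by
    have hsub : ∀ j ∈ Ico (max (b + 1) q) r, b < j ∧ q ≤ j ∧ j < r := fun j hj => by
      have := mem_Ico.1 hj; omega
    calc min (r - 1 - b) (r - q) = #((Ico (max (b + 1) q) r).image u) := by
          rw [card_image_of_injOn (h.injOn_right fun j hj => mem_range.2 (hsub j hj).2.2),
            Nat.card_Ico]
          omega
      _ ≤ d := card_le_card <| image_subset_iff.2 fun j hj => mem_filter.2
          ⟨huY j (hsub j hj).2.1 (hsub j hj).2.2,
            h.strictMonoOn_right hbr (hsub j hj).2.2 (hsub j hj).1⟩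
  have hfr : r - 1 - d < r := by omega
  refine ⟨hfr, ?_, h.strictMonoOn_right.monotoneOn hbr hfr (by omega)⟩
  rcases lt_or_ge (r - 1 - d) q with hfq | hqf
  · exact (h.left_le _ hfq).trans htx.le
  · rw [show r - 1 - d = b by omega]
    exact h.left_le_right b hbr

lemma isPartialTransversalOf (h : IsIntervalSquare l u r p q t)
    (hY : Y ⊆ (range q).image l ∪ (Ico p r).image u) (houter : outerFinset l u r p q ⊆ Y)
    (hYr : #Y ≤ r) : IsPartialTransversalOf l u r Y := by
  have hlY : ∀ j < p, l j ∈ Y := fun j hj =>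
    houter (mem_union_left _ (mem_image_of_mem l (mem_range.2 hj)))
  have huY : ∀ j, q ≤ j → j < r → u j ∈ Y := fun j hqj hjr =>
    houter (mem_union_right _ (mem_image_of_mem u (mem_Ico.2 ⟨hqj, hjr⟩)))
  refine ⟨greedyIndex Y r t, (strictMonoOn_greedyIndex hYr t).injOn, fun x hx => ?_⟩
  rcases le_or_gt x t with hxt | htx
  · exact h.greedyIndex_mem_of_le hY hlY hx hxt
  · exact h.greedyIndex_mem_of_lt hY huY hx htx

lemma isPartialTransversalOf_union_iff (h : IsIntervalSquare l u r p q t) {X : Finset α}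
    (hX : X ⊆ squareFinset l u p q) :
    IsPartialTransversalOf l u r ↑(X ∪ outerFinset l u r p q) ↔ #X ≤ q - p := by
  have hcard : #(X ∪ outerFinset l u r p q) = #X + (p + (r - q)) := by
    rw [card_union_of_disjoint (h.disjoint_squareFinset_outerFinset.mono_left hX),
      h.card_outerFinset]
  have := h.le_left
  have := h.le_right
  refine ⟨fun hT => by have := hT.card_le; omega, fun hXk => h.isPartialTransversalOf
    ((union_subset_union_left hX).trans h.squareFinset_union_outerFinset_subset)
    subset_union_right (by omega)⟩

end IsIntervalSquare

end IntervalSystem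

lemma IsLatticePair.isIntervalSquare {P Q : List Bool} {m r : ℕ} (h : IsLatticePair P Q m r)
    (t : ℕ) :
    IsIntervalSquare (northPos Q) (northPos P) r (nCount (P.take t)) (nCount (Q.take t)) t where
  strictMonoOn_left := h.northQ ▸ strictMonoOn_northPos
  strictMonoOn_right := h.northP ▸ strictMonoOn_northPos
  left_le_right _ hj := (northPos_le_iff (h.northQ ▸ hj) _).2 <|
    ((northPos_le_iff (h.northP ▸ hj) _).1 le_rfl).trans_le (h.notAbove _)
  left_le _ hj := (northPos_le_iff ((nCount_take_le t).trans_lt' hj) _).2 hj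
  lt_right _ hj hpj := not_le.1 fun hle =>
    (not_lt.2 hpj) ((northPos_le_iff (h.northP ▸ hj) _).1 hle)
  le_left := h.notAbove t
  le_right := h.northQ ▸ nCount_take_le t

lemma IsLatticePair.northPos_mem_Icc {P Q : List Bool} {m r : ℕ} (h : IsLatticePair P Q m r)
    {j : ℕ} (hj : j < r) :
    northPos Q j ∈ Set.Icc 1 (m + r) ∧ northPos P j ∈ Set.Icc 1 (m + r) :=
  ⟨h.lenQ ▸ _root_.northPos_mem_Icc (h.northQ ▸ hj),
    h.lenP ▸ _root_.northPos_mem_Icc (h.northP ▸ hj)⟩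

lemma isMinorOf_contract_restrict {α : Type*} {M : Matroid α} {C S : Set α} (hC : C ⊆ M.E)
    (hS : S ⊆ M.E \ C) : IsMinorOf ((M ／ C) ↾ S) M :=
  ⟨C, (M.E \ C) \ S, hC, Set.sdiff_subset.trans Set.sdiff_subset,
    Set.disjoint_sdiff_right.mono_right Set.sdiff_subset,
    by rw [Set.sdiff_sdiff_cancel_left hS]; rfl⟩

lemma isUniform_contract_restrict {α : Type*} [DecidableEq α] {M : Matroid α} {C S : Finset α}
    {k : ℕ} (hSC : Disjoint S C) (hindep : ∀ X ⊆ S, M.Indep ↑(X ∪ C) ↔ X.card ≤ k) :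
    IsUniform ((M ／ ↑C) ↾ ↑S) k S.card := by
  have hC : M.Indep ↑C := by simpa using (hindep ∅ (Finset.empty_subset _)).2 (Nat.zero_le k)
  refine ⟨Set.encard_coe_eq_coe_finsetCard S, fun X hX => ?_⟩
  obtain ⟨X, rfl⟩ := (S.finite_toSet.subset hX).exists_finset_coe
  have hXS : X ⊆ S := Finset.coe_subset.1 hX
  rw [Matroid.restrict_indep_iff, hC.contract_indep_iff, ← Finset.coe_union, hindep X hXS,
    Set.encard_coe_eq_coe_finsetCard, Nat.cast_le, Finset.coe_subset, and_iff_left hXS]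
  exact and_iff_right (Finset.disjoint_coe.2 (hSC.mono_left hXS))

/-- If a path presentation `[P,Q]` contains a `k × k` square, then the lattice path
matroid `M[P,Q]` has a `U_{k,2k}`-minor. -/
theorem stmt_9 (P Q : List Bool) (m r k : ℕ) (M : Matroid ℕ)
    (hM : IsLPM M P Q m r) (i : ℕ) (hsq : HasSquareAt P Q k i) :
    ∃ N : Matroid ℕ, IsMinorOf N M ∧ IsUniform N k (2 * k) := by
  obtain ⟨hLP, hE, hindep⟩ := hM
  have h := hLP.isIntervalSquare i
  have hk : nCount (Q.take i) - nCount (P.take i) = k := by have := hsq.2; omega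
  set C := outerFinset (northPos Q) (northPos P) r (nCount (P.take i)) (nCount (Q.take i))
  set S := squareFinset (northPos Q) (northPos P) (nCount (P.take i)) (nCount (Q.take i))
  have hSC : ↑(S ∪ C) ⊆ M.E := hE ▸ h.coe_squareFinset_union_outerFinset_subset
    (fun _ hj => (hLP.northPos_mem_Icc hj).1) (fun _ hj => (hLP.northPos_mem_Icc hj).2)
  refine ⟨(M ／ ↑C) ↾ ↑S, isMinorOf_contract_restrict (subset_trans (by simp) hSC)
    (Set.subset_sdiff.2 ⟨subset_trans (by simp) hSC,
      Finset.disjoint_coe.2 h.disjoint_squareFinset_outerFinset⟩), ?_⟩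
  rw [← hk, ← h.card_squareFinset]
  refine isUniform_contract_restrict h.disjoint_squareFinset_outerFinset fun X hX => ?_
  rw [hindep, ← h.isPartialTransversalOf_union_iff hX]
  exact and_iff_right (subset_trans (by gcongr) hSC)
end

section
/- The branch-width of the uniform matroid U_{j,2j} equals ⌈2j/3⌉ + 1 for j ≥ 1. -/
open Matroid

/-!
In `U_{j,2j}` a set of `k` elements has connectivity `λ = min(k, 2j - k) + 1`, so a branch
decomposition of width `w` is a cubic tree with `n = 2j` leaves in which every edge has a side
with at most `w - 1` leaves. Descending from the root into a child with at least `⌈n/3⌉` leaves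
for as long as there is one ends at a subtree with between `⌈n/3⌉` and `2⌈n/3⌉ - 2` leaves (or a
single leaf, when `n = 2`), so every tree has an edge with at least `⌈n/3⌉` leaves on both sides.
Conversely, cutting the leaves into consecutive blocks of `⌈n/3⌉`, `⌈n/3⌉` and the remaining
`n - 2⌈n/3⌉ ≤ ⌈n/3⌉` elements and hanging the blocks off a path attains this bound.
-/

namespace BTree

variable {α : Type*}

lemma self_mem_subtrees (t : BTree α) : t ∈ t.subtrees := by
  cases t <;> simp [subtrees]

lemma leafList_sublist_of_mem_subtrees {t s : BTree α} (h : s ∈ t.subtrees) :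
    s.leafList.Sublist t.leafList := by
  induction t with
  | leaf a =>
    rw [subtrees, List.mem_singleton] at h
    rw [h]
  | node l r ihl ihr =>
    simp only [subtrees, List.mem_cons, List.mem_append] at h
    rcases h with rfl | h | h
    · rfl
    · exact (ihl h).trans (List.sublist_append_left _ _)
    · exact (ihr h).trans (List.sublist_append_right _ _)

lemma length_leafList_le_of_mem_subtrees {t s : BTree α} (h : s ∈ t.subtrees) :
    s.leafList.length ≤ t.leafList.length :=
  (leafList_sublist_of_mem_subtrees h).length_le

lemma exists_leafList_eq : ∀ l : List α, l ≠ [] → ∃ t : BTree α, t.leafList = l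
  | [], h => absurd rfl h
  | [a], _ => ⟨.leaf a, rfl⟩
  | a :: b :: l, _ => by
    obtain ⟨t, ht⟩ := exists_leafList_eq (b :: l) (List.cons_ne_nil _ _)
    exact ⟨.node (.leaf a) t, by rw [leafList, ht]; rfl⟩

lemma exists_mem_subtrees_le_length_le_max (c : ℕ) {t : BTree α}
    (h : c ≤ t.leafList.length) :
    ∃ s ∈ t.subtrees, c ≤ s.leafList.length ∧ s.leafList.length ≤ max (2 * c - 2) 1 := by
  induction t with
  | leaf a => exact ⟨.leaf a, self_mem_subtrees _, h, by simp [leafList]⟩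
  | node l r ihl ihr =>
    by_cases hl : c ≤ l.leafList.length
    · obtain ⟨s, hs, hcs⟩ := ihl hl
      exact ⟨s, by simp [subtrees, hs], hcs⟩
    by_cases hr : c ≤ r.leafList.length
    · obtain ⟨s, hs, hcs⟩ := ihr hr
      exact ⟨s, by simp [subtrees, hs], hcs⟩
    refine ⟨node l r, self_mem_subtrees _, h, ?_⟩
    simp only [leafList, List.length_append] at h ⊢
    omega

lemma exists_mem_subtrees_ceil_div_three_le (t : BTree α) (ht : 2 ≤ t.leafList.length) :
    ∃ s ∈ t.subtrees, (t.leafList.length + 2) / 3 ≤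
      min s.leafList.length (t.leafList.length - s.leafList.length) := by
  obtain ⟨s, hs, hcs, hs_le⟩ :=
    exists_mem_subtrees_le_length_le_max ((t.leafList.length + 2) / 3) (t := t) (by omega)
  exact ⟨s, hs, by omega⟩

/-- Inside a tree with `N` leaves, each edge above a subtree of `t` has a side with at most `c`
leaves. -/
def SplitWidthLE (N c : ℕ) (t : BTree α) : Prop :=
  ∀ s ∈ t.subtrees, min s.leafList.length (N - s.leafList.length) ≤ c

lemma splitWidthLE_of_length_le {N c : ℕ} {t : BTree α} (h : t.leafList.length ≤ c) :
    SplitWidthLE N c t := fun _ hs =>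
  (min_le_left _ _).trans ((length_leafList_le_of_mem_subtrees hs).trans h)

lemma SplitWidthLE.node {N c : ℕ} {l r : BTree α} (hl : SplitWidthLE N c l)
    (hr : SplitWidthLE N c r)
    (h : min (node l r).leafList.length (N - (node l r).leafList.length) ≤ c) :
    SplitWidthLE N c (node l r) := by
  intro s hs
  simp only [subtrees, List.mem_cons, List.mem_append] at hs
  rcases hs with rfl | hs | hs
  exacts [h, hl s hs, hr s hs]

lemma exists_leafList_eq_splitWidthLE_of_length_le_two_mul (N : ℕ) {c : ℕ} (l : List α)
    (hl : l ≠ []) (h2c : l.length ≤ 2 * c) (hroot : min l.length (N - l.length) ≤ c) :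
    ∃ t : BTree α, t.leafList = l ∧ SplitWidthLE N c t := by
  by_cases hc : l.length ≤ c
  · obtain ⟨t, rfl⟩ := exists_leafList_eq l hl
    exact ⟨t, rfl, splitWidthLE_of_length_le hc⟩
  have hpos := List.length_pos_of_ne_nil hl
  obtain ⟨t₁, h₁⟩ := exists_leafList_eq (l.take c) (by simp [hl]; omega)
  obtain ⟨t₂, h₂⟩ := exists_leafList_eq (l.drop c) (by simpa using not_le.1 hc)
  have hlist : (node t₁ t₂).leafList = l := by rw [leafList, h₁, h₂, List.take_append_drop]
  refine ⟨node t₁ t₂, hlist, .node ?_ ?_ (hlist ▸ hroot)⟩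
  · exact splitWidthLE_of_length_le (by simp [h₁])
  · exact splitWidthLE_of_length_le (by simp [h₂]; omega)

lemma exists_leafList_eq_splitWidthLE (l : List α) (hl : l ≠ []) :
    ∃ t : BTree α, t.leafList = l ∧ SplitWidthLE l.length ((l.length + 2) / 3) t := by
  set c := (l.length + 2) / 3
  by_cases h2c : l.length ≤ 2 * c
  · exact exists_leafList_eq_splitWidthLE_of_length_le_two_mul _ l hl h2c (by simp)
  have hpos := List.length_pos_of_ne_nil hl
  obtain ⟨t₁, h₁⟩ := exists_leafList_eq (l.take c) (by simp [hl]; omega)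
  obtain ⟨t₂, h₂, ht₂⟩ := exists_leafList_eq_splitWidthLE_of_length_le_two_mul l.length (c := c)
    (l.drop c) (by simp; omega) (by simp; omega) (by simp; omega)
  have hlist : (node t₁ t₂).leafList = l := by rw [leafList, h₁, h₂, List.take_append_drop]
  refine ⟨node t₁ t₂, hlist, .node ?_ ht₂ (by simp [hlist])⟩
  exact splitWidthLE_of_length_le (by simp [h₁])

end BTree

section Uniform

variable {α : Type*} {M : Matroid α}

lemma IsUniform.eRk_eq {r n : ℕ} (hM : IsUniform M r n) {A : Set α} (hA : A ⊆ M.E) {a : ℕ}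
    (ha : A.encard = a) : _root_.eRk M A = (min a r : ℕ) := by
  apply le_antisymm
  · refine iSup_le fun ⟨I, hI, hIA⟩ => ?_
    have hIr : I.encard ≤ r := (hM.2 I hI.subset_ground).1 hI
    have hIa : I.encard ≤ a := ha ▸ Set.encard_le_encard hIA
    push_cast
    exact le_min hIa hIr
  · obtain ⟨I, hIA, hI⟩ := Set.exists_subset_encard_eq
      (show ((min a r : ℕ) : ℕ∞) ≤ A.encard by rw [ha]; exact_mod_cast min_le_left a r)
    have hIind : M.Indep I :=
      (hM.2 I (hIA.trans hA)).2 (by rw [hI]; exact_mod_cast min_le_right a r)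
    exact hI.ge.trans
      (le_iSup (fun I : {I : Set α // M.Indep I ∧ I ⊆ A} => (I : Set α).encard) ⟨I, hIind, hIA⟩)

lemma IsUniform.lamVal_eq {r : ℕ} (hM : IsUniform M r (2 * r)) {A : Set α} (hA : A ⊆ M.E)
    {a : ℕ} (ha : A.encard = a) : lamVal M A = (min a (2 * r - a) : ℕ) + 1 := by
  have har : a ≤ 2 * r := by
    have h := Set.encard_le_encard hA
    rw [ha, hM.1] at h
    exact_mod_cast h
  have hcompl : (M.E \ A).encard = (2 * r - a : ℕ) := by
    have h := Set.encard_sdiff_add_encard_of_subset hA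
    rw [ha, hM.1] at h
    rw [ENat.natCast_sub, ← h, (ENat.addLECancellable_natCast a).add_tsub_cancel_right]
  rw [lamVal, hM.eRk_eq hA ha, hM.eRk_eq Set.Subset.rfl hM.1, hM.eRk_eq Set.sdiff_subset hcompl,
    ← Nat.cast_add, ← ENat.natCast_sub]
  congr 2
  omega

end Uniform

section BranchDecomp

variable {α : Type*} {M : Matroid α} {t : BTree α}

lemma encard_setOf_mem_of_nodup {l : List α} (hl : l.Nodup) :
    {x | x ∈ l}.encard = l.length := by
  classical
  rw [← List.coe_toFinset, Set.encard_coe_eq_coe_finsetCard, List.toFinset_card_of_nodup hl]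

lemma decompWidth_le_iff {w : ℕ∞} :
    decompWidth M t ≤ w ↔ ∀ s ∈ t.subtrees, lamVal M {x | x ∈ s.leafList} ≤ w := by
  rw [decompWidth, ← bot_eq_zero']
  refine ⟨fun h s hs => (List.le_max_of_le (List.mem_map_of_mem hs) le_rfl).trans h,
    fun h => List.max_le_of_forall_le _ _ ?_⟩
  simpa using h

lemma lamVal_le_decompWidth {s : BTree α} (hs : s ∈ t.subtrees) :
    lamVal M {x | x ∈ s.leafList} ≤ decompWidth M t :=
  decompWidth_le_iff.1 le_rfl s hs

lemma IsBranchDecomp.encard_ground (ht : IsBranchDecomp M t) :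
    M.E.encard = t.leafList.length := by
  rw [← ht.2, encard_setOf_mem_of_nodup ht.1]

lemma IsBranchDecomp.lamVal_eq {r : ℕ} (hM : IsUniform M r (2 * r)) (ht : IsBranchDecomp M t)
    {s : BTree α} (hs : s ∈ t.subtrees) :
    lamVal M {x | x ∈ s.leafList} =
      (min s.leafList.length (2 * r - s.leafList.length) : ℕ) + 1 := by
  have hsub := BTree.leafList_sublist_of_mem_subtrees hs
  refine hM.lamVal_eq ?_ (encard_setOf_mem_of_nodup (hsub.nodup ht.1))
  rw [← ht.2]
  exact fun x hx => hsub.subset hx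

end BranchDecomp

/-- The branch-width of the uniform matroid `U_{j,2j}` equals `⌈2j/3⌉ + 1` for `j ≥ 1`. -/
theorem stmt_11 {α : Type*} (M : Matroid α) (j : ℕ) (hj : 1 ≤ j)
    (hM : IsUniform M j (2 * j)) :
    branchWidth M = ((2 * j + 2) / 3 + 1 : ℕ) := by
  apply le_antisymm
  · obtain ⟨l, hl_nodup, hl_E⟩ : ∃ l : List α, l.Nodup ∧ {x | x ∈ l} = M.E :=
      ⟨(Set.finite_of_encard_eq_coe hM.1).toFinset.toList, Finset.nodup_toList _, by ext; simp⟩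
    have hlen : l.length = 2 * j := by
      exact_mod_cast (encard_setOf_mem_of_nodup hl_nodup).symm.trans (hl_E ▸ hM.1)
    obtain ⟨t, rfl, ht⟩ :=
      BTree.exists_leafList_eq_splitWidthLE l (by rintro rfl; simp at hlen; omega)
    have hdec : IsBranchDecomp M t := ⟨hl_nodup, hl_E⟩
    refine sInf_le_of_le ⟨t, hdec, rfl⟩ (decompWidth_le_iff.2 fun s hs => ?_)
    rw [hdec.lamVal_eq hM hs, ← hlen]
    exact_mod_cast Nat.add_le_add_right (ht s hs) 1
  · refine le_sInf ?_
    rintro _ ⟨t, ht, rfl⟩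
    have hlen : t.leafList.length = 2 * j := by exact_mod_cast ht.encard_ground.symm.trans hM.1
    obtain ⟨s, hs, hmin⟩ := t.exists_mem_subtrees_ceil_div_three_le (by omega)
    refine le_trans ?_ (lamVal_le_decompWidth hs)
    rw [ht.lamVal_eq hM hs, ← hlen]
    exact_mod_cast Nat.add_le_add_right hmin 1
end
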